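/- arXiv:2307.09491 — 2 statements merged into one kernel-verified Lean document; each statement's English description precedes it below -/
import Mathlib

section
/- Let G ≅ (ℤ/ℓ^eℤ)², ℓ prime. Given K ∈ G, m, n ∈ ℤ/ℓ^eℤ, there exist P, Q ∈ G with K = mP + nQ and ⟨P, Q⟩ = G if and only if ord(K) · ℓ^r = ℓ^e, where r is the ℓ-adic valuation of gcd(m, n) (with r = e when m = n = 0). -/
private lemma mem_closure_pair {N : ℕ} [NeZero N] (v w x : ZMod N × ZMod N) (c d : ZMod N)
    (h : c • v + d • w = x) : x ∈ AddSubgroup.closure ({v, w} : Set (ZMod N × ZMod N)) := by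
  subst h
  · have hv : c • v = c.val • v := by
      rw [← Nat.cast_smul_eq_nsmul (ZMod N), ZMod.natCast_val, ZMod.cast_id]
    have hw : d • w = d.val • w := by
      rw [← Nat.cast_smul_eq_nsmul (ZMod N), ZMod.natCast_val, ZMod.cast_id]
    rw [hv, hw]
    exact add_mem (AddSubgroup.nsmul_mem _ (AddSubgroup.subset_closure (by simp)) _)
      (AddSubgroup.nsmul_mem _ (AddSubgroup.subset_closure (by simp)) _)

private lemma indep_pair {N : ℕ} [NeZero N] (P Q : ZMod N × ZMod N)
    (hgen : AddSubgroup.closure ({P, Q} : Set (ZMod N × ZMod N)) = ⊤)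
    (a b : ZMod N) (h : a • P + b • Q = 0) : a = 0 ∧ b = 0 := by
  classical
  let f : (ZMod N × ZMod N) →ₗ[ZMod N] (ZMod N × ZMod N) :=
    { toFun := fun x => x.1 • P + x.2 • Q
      map_add' := by intro x y; simp [add_smul]; abel
      map_smul' := by intro c x; simp [mul_smul, smul_add] }
  have hsurj : Function.Surjective f := by
    intro x
    have hx : x ∈ AddSubgroup.closure ({P, Q} : Set (ZMod N × ZMod N)) := by
      rw [hgen]; trivial
    induction hx using AddSubgroup.closure_induction with
    | mem y hy =>
      rcases hy with rfl | rfl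
      · exact ⟨(1, 0), by simp [f]⟩
      · exact ⟨(0, 1), by simp [f]⟩
    | zero => exact ⟨0, by simp [f]⟩
    | add x y _ _ hx hy =>
      obtain ⟨u, rfl⟩ := hx; obtain ⟨v, rfl⟩ := hy
      exact ⟨u + v, by simp [f, add_smul]; abel⟩
    | neg x _ hx =>
      obtain ⟨u, rfl⟩ := hx
      exact ⟨-u, by simp [f, neg_smul]; abel⟩
  have hinj : Function.Injective f := Finite.injective_iff_surjective.mpr hsurj
  have h2 : f (a, b) = f 0 := by simpa [f] using h
  have h3 := hinj h2
  exact ⟨congrArg Prod.fst h3, congrArg Prod.snd h3⟩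

private lemma gen_pair_left {N : ℕ} [NeZero N] (a b t : ZMod N) (ht : a * t = 1) :
    AddSubgroup.closure ({((a, b) : ZMod N × ZMod N), (0, 1)} : Set (ZMod N × ZMod N)) = ⊤ := by
  rw [eq_top_iff]
  rintro ⟨x, y⟩ -
  refine mem_closure_pair _ _ _ (x * t) (y - x * t * b) ?_
  have : x * t * a = x := by rw [mul_assoc, mul_comm t a, ht, mul_one]
  simp [Prod.ext_iff, this]

private lemma gen_pair_right {N : ℕ} [NeZero N] (a b t : ZMod N) (ht : b * t = 1) :
    AddSubgroup.closure ({((a, b) : ZMod N × ZMod N), (1, 0)} : Set (ZMod N × ZMod N)) = ⊤ := by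
  rw [eq_top_iff]
  rintro ⟨x, y⟩ -
  refine mem_closure_pair _ _ _ (y * t) (x - y * t * a) ?_
  have : y * t * b = y := by rw [mul_assoc, mul_comm t b, ht, mul_one]
  simp [Prod.ext_iff, this]

private lemma build {ℓ e r : ℕ} (hℓ : ℓ.Prime) (hre : r < e)
    (K : ZMod (ℓ ^ e) × ZMod (ℓ ^ e)) (m n : ZMod (ℓ ^ e))
    (hm : ℓ ^ r ∣ m.val) (hm1 : ¬ ℓ ^ (r + 1) ∣ m.val) (hn : ℓ ^ r ∣ n.val)
    (hK : addOrderOf K = ℓ ^ (e - r)) :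
    ∃ P Q : ZMod (ℓ ^ e) × ZMod (ℓ ^ e), K = m.val • P + n.val • Q ∧
      AddSubgroup.closure ({P, Q} : Set (ZMod (ℓ ^ e) × ZMod (ℓ ^ e))) = ⊤ := by
  haveI : NeZero (ℓ ^ e) := ⟨pow_ne_zero e hℓ.ne_zero⟩
  have hcancel : ∀ v : ZMod (ℓ ^ e), ∀ k : ℕ, k • v = ((k * v.val : ℕ) : ZMod (ℓ ^ e)) := by
    intro v k
    rw [nsmul_eq_mul, Nat.cast_mul, ZMod.natCast_val, ZMod.cast_id]
  have hdvd_comp : ∀ v : ZMod (ℓ ^ e), (ℓ ^ (e - r)) • v = 0 → ℓ ^ r ∣ v.val := by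
    intro v hv
    rw [hcancel] at hv
    have hd : ℓ ^ e ∣ ℓ ^ (e - r) * v.val := (ZMod.natCast_eq_zero_iff _ _).mp hv
    have h2 : ℓ ^ (e - r) * ℓ ^ r ∣ ℓ ^ (e - r) * v.val := by
      rwa [← pow_add, Nat.sub_add_cancel hre.le]
    exact (mul_dvd_mul_iff_left (pow_ne_zero (e - r) hℓ.ne_zero)).mp h2
  have hKzero : (ℓ ^ (e - r)) • K = 0 := by rw [← hK]; exact addOrderOf_nsmul_eq_zero K
  have hKa : ℓ ^ r ∣ K.1.val := hdvd_comp K.1 (by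
    have := congrArg Prod.fst hKzero; simpa using this)
  have hKb : ℓ ^ r ∣ K.2.val := hdvd_comp K.2 (by
    have := congrArg Prod.snd hKzero; simpa using this)
  obtain ⟨a', ha'⟩ := hKa
  obtain ⟨b', hb'⟩ := hKb
  set K' : ZMod (ℓ ^ e) × ZMod (ℓ ^ e) := ((a' : ZMod (ℓ ^ e)), (b' : ZMod (ℓ ^ e))) with hK'def
  have hcomp : ∀ (c x : ℕ), ((ℓ ^ c : ℕ) : ZMod (ℓ ^ e)) • ((x : ZMod (ℓ ^ e))) = ((ℓ ^ c * x : ℕ) : ZMod (ℓ ^ e)) := by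
    intro c x; rw [smul_eq_mul, Nat.cast_mul]
  have hK' : ((ℓ ^ r : ℕ) : ZMod (ℓ ^ e)) • K' = K := by
    have h1 : ((ℓ ^ r : ℕ) : ZMod (ℓ ^ e)) • ((a' : ZMod (ℓ ^ e))) = K.1 := by
      rw [hcomp, ← ha', ZMod.natCast_val, ZMod.cast_id]
    have h2 : ((ℓ ^ r : ℕ) : ZMod (ℓ ^ e)) • ((b' : ZMod (ℓ ^ e))) = K.2 := by
      rw [hcomp, ← hb', ZMod.natCast_val, ZMod.cast_id]
    ext
    · simpa [hK'def] using h1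
    · simpa [hK'def] using h2
  have hunit : ¬ ℓ ∣ a' ∨ ¬ ℓ ∣ b' := by
    by_contra hcon
    push_neg at hcon
    obtain ⟨⟨ca, hca⟩, ⟨cb, hcb⟩⟩ := hcon
    have hzero : (ℓ ^ (e - r - 1)) • K = 0 := by
      have heq : e - r - 1 + (r + 1) = e := by omega
      have hcompz : ∀ (x : ZMod (ℓ ^ e)) (c : ℕ), x.val = ℓ ^ r * (ℓ * c) →
          (ℓ ^ (e - r - 1)) • x = 0 := by
        intro x c hx
        rw [hcancel, ZMod.natCast_eq_zero_iff]
        refine ⟨c, ?_⟩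
        have hpw : ℓ ^ (e - r - 1) * ℓ ^ r * ℓ = ℓ ^ e := by
          rw [← pow_add, ← pow_succ]
          congr 1
        rw [hx, ← hpw]
        ring
      have h1 := hcompz K.1 ca (by rw [ha', hca])
      have h2 := hcompz K.2 cb (by rw [hb', hcb])
      ext
      · simpa using h1
      · simpa using h2
    have hdvd := addOrderOf_dvd_of_nsmul_eq_zero hzero
    rw [hK] at hdvd
    have hle := (Nat.pow_dvd_pow_iff_le_right hℓ.one_lt).mp hdvd
    omega
  obtain ⟨m₁, hm₁⟩ := hm
  obtain ⟨n₁, hn₁⟩ := hn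
  have hℓm₁ : ¬ ℓ ∣ m₁ := by
    rintro ⟨c, hc⟩
    exact hm1 ⟨c, by rw [hm₁, hc, pow_succ]; ring⟩
  have hinv : ∀ x : ℕ, ¬ ℓ ∣ x → ∃ t : ZMod (ℓ ^ e), (x : ZMod (ℓ ^ e)) * t = 1 := by
    intro x hx
    have hcop : Nat.Coprime x (ℓ ^ e) := ((Nat.Prime.coprime_iff_not_dvd hℓ).mpr hx).symm.pow_right e
    refine ⟨((ZMod.unitOfCoprime x hcop)⁻¹ : (ZMod (ℓ ^ e))ˣ), ?_⟩
    rw [← ZMod.coe_unitOfCoprime x hcop]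
    exact (ZMod.unitOfCoprime x hcop).mul_inv
  obtain ⟨w, hw⟩ := hinv m₁ hℓm₁
  obtain ⟨Q, hQtop⟩ : ∃ Q : ZMod (ℓ ^ e) × ZMod (ℓ ^ e),
      AddSubgroup.closure ({K', Q} : Set (ZMod (ℓ ^ e) × ZMod (ℓ ^ e))) = ⊤ := by
    rcases hunit with ha | hb
    · obtain ⟨t, ht⟩ := hinv a' ha
      exact ⟨(0, 1), gen_pair_left _ _ t ht⟩
    · obtain ⟨t, ht⟩ := hinv b' hb
      exact ⟨(1, 0), gen_pair_right _ _ t ht⟩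
  set P : ZMod (ℓ ^ e) × ZMod (ℓ ^ e) := w • (K' - (n₁ : ZMod (ℓ ^ e)) • Q) with hPdef
  have key : (m₁ : ZMod (ℓ ^ e)) • P = K' - (n₁ : ZMod (ℓ ^ e)) • Q := by
    rw [hPdef, smul_smul, hw, one_smul]
  have keyK' : (m₁ : ZMod (ℓ ^ e)) • P + (n₁ : ZMod (ℓ ^ e)) • Q = K' := by
    rw [key, sub_add_cancel]
  have cast_m : ((m.val : ℕ) : ZMod (ℓ ^ e)) = ((ℓ ^ r : ℕ) : ZMod (ℓ ^ e)) * (m₁ : ZMod (ℓ ^ e)) := by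
    rw [hm₁]; push_cast; ring
  have cast_n : ((n.val : ℕ) : ZMod (ℓ ^ e)) = ((ℓ ^ r : ℕ) : ZMod (ℓ ^ e)) * (n₁ : ZMod (ℓ ^ e)) := by
    rw [hn₁]; push_cast; ring
  refine ⟨P, Q, ?_, ?_⟩
  · rw [← Nat.cast_smul_eq_nsmul (ZMod (ℓ ^ e)) m.val P, ← Nat.cast_smul_eq_nsmul (ZMod (ℓ ^ e)) n.val Q,
      cast_m, cast_n, mul_smul, mul_smul, ← smul_add, keyK', hK']
  · apply le_antisymm le_top
    rw [← hQtop]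
    apply (AddSubgroup.closure_le _).mpr
    rintro x (rfl | rfl)
    · exact mem_closure_pair P Q _ _ _ keyK'
    · exact AddSubgroup.subset_closure (by simp)

private lemma rlt {ℓ e r : ℕ} (hℓ : ℓ.Prime) (he : 1 ≤ e) [NeZero (ℓ ^ e)]
    (m n : ZMod (ℓ ^ e))
    (h1 : ℓ ^ r ∣ Nat.gcd m.val n.val) (h2 : ¬ ℓ ^ (r + 1) ∣ Nat.gcd m.val n.val) : r < e := by
  have hg0 : Nat.gcd m.val n.val ≠ 0 := fun h => h2 (h ▸ dvd_zero _)
  have hne : m.val ≠ 0 ∨ n.val ≠ 0 := by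
    by_contra hc
    push_neg at hc
    exact hg0 (by rw [hc.1, hc.2]; rfl)
  have hlt : Nat.gcd m.val n.val < ℓ ^ e := by
    rcases hne with h | h
    · exact lt_of_le_of_lt (Nat.le_of_dvd (Nat.pos_of_ne_zero h) (Nat.gcd_dvd_left _ _)) (ZMod.val_lt m)
    · exact lt_of_le_of_lt (Nat.le_of_dvd (Nat.pos_of_ne_zero h) (Nat.gcd_dvd_right _ _)) (ZMod.val_lt n)
  have hle : ℓ ^ r ≤ Nat.gcd m.val n.val := Nat.le_of_dvd (Nat.pos_of_ne_zero hg0) h1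
  exact (Nat.pow_lt_pow_iff_right hℓ.one_lt).mp (lt_of_le_of_lt hle hlt)

private lemma main {ℓ e : ℕ} (hℓ : ℓ.Prime) (he : 1 ≤ e)
    (K : ZMod (ℓ ^ e) × ZMod (ℓ ^ e)) (m n : ZMod (ℓ ^ e)) (r : ℕ)
    (hr : (ℓ ^ r ∣ Nat.gcd m.val n.val ∧ ¬ ℓ ^ (r + 1) ∣ Nat.gcd m.val n.val) ∨
          (m = 0 ∧ n = 0 ∧ r = e)) :
    (∃ P Q : ZMod (ℓ ^ e) × ZMod (ℓ ^ e), K = m.val • P + n.val • Q ∧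
        AddSubgroup.closure ({P, Q} : Set (ZMod (ℓ ^ e) × ZMod (ℓ ^ e))) = ⊤) ↔
      addOrderOf K * ℓ ^ r = ℓ ^ e := by
  haveI : NeZero (ℓ ^ e) := ⟨pow_ne_zero e hℓ.ne_zero⟩
  constructor
  · rintro ⟨P, Q, hKeq, hgen⟩
    rcases hr with ⟨h1, h2⟩ | ⟨hm0, hn0, hre⟩
    · have hre : r < e := rlt hℓ he m n h1 h2
      have hmv : ℓ ^ r ∣ m.val := h1.trans (Nat.gcd_dvd_left _ _)
      have hnv : ℓ ^ r ∣ n.val := h1.trans (Nat.gcd_dvd_right _ _)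
      have hzero : ∀ (c v : ℕ), (P' : ZMod (ℓ ^ e) × ZMod (ℓ ^ e)) → ℓ ^ e ∣ c * v → (c * v) • P' = (0 : ZMod (ℓ ^ e) × ZMod (ℓ ^ e)) := by
        intro c v P' hdv
        rw [← Nat.cast_smul_eq_nsmul (ZMod (ℓ ^ e)), (ZMod.natCast_eq_zero_iff _ _).mpr hdv, zero_smul]
      have dvd1 : addOrderOf K ∣ ℓ ^ (e - r) := by
        apply addOrderOf_dvd_of_nsmul_eq_zero
        rw [hKeq, smul_add, smul_smul, smul_smul]
        obtain ⟨m₁, hm₁⟩ := hmv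
        obtain ⟨n₁, hn₁⟩ := hnv
        have hd1 : ℓ ^ e ∣ ℓ ^ (e - r) * m.val := ⟨m₁, by rw [hm₁, ← mul_assoc, ← pow_add, Nat.sub_add_cancel hre.le]⟩
        have hd2 : ℓ ^ e ∣ ℓ ^ (e - r) * n.val := ⟨n₁, by rw [hn₁, ← mul_assoc, ← pow_add, Nat.sub_add_cancel hre.le]⟩
        rw [hzero _ _ P hd1, hzero _ _ Q hd2, add_zero]
      have ndvd : ¬ addOrderOf K ∣ ℓ ^ (e - r - 1) := by
        intro hdd
        have hz : (ℓ ^ (e - r - 1)) • K = 0 := by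
          obtain ⟨c, hc⟩ := hdd
          rw [hc, mul_nsmul, addOrderOf_nsmul_eq_zero, smul_zero]
        rw [hKeq, smul_add, smul_smul, smul_smul] at hz
        have hz' : ((ℓ ^ (e - r - 1) * m.val : ℕ) : ZMod (ℓ ^ e)) • P +
            ((ℓ ^ (e - r - 1) * n.val : ℕ) : ZMod (ℓ ^ e)) • Q = 0 := by
          rw [Nat.cast_smul_eq_nsmul, Nat.cast_smul_eq_nsmul]; exact hz
        obtain ⟨hP0, hQ0⟩ := indep_pair P Q hgen _ _ hz'
        have hdm : ℓ ^ e ∣ ℓ ^ (e - r - 1) * m.val := (ZMod.natCast_eq_zero_iff _ _).mp hP0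
        have hdn : ℓ ^ e ∣ ℓ ^ (e - r - 1) * n.val := (ZMod.natCast_eq_zero_iff _ _).mp hQ0
        have hcancel : ∀ v : ℕ, ℓ ^ e ∣ ℓ ^ (e - r - 1) * v → ℓ ^ (r + 1) ∣ v := by
          intro v hv
          have he2 : (e - r - 1) + (r + 1) = e := by omega
          have : ℓ ^ (e - r - 1) * ℓ ^ (r + 1) ∣ ℓ ^ (e - r - 1) * v := by
            rwa [← pow_add, he2]
          exact (mul_dvd_mul_iff_left (pow_ne_zero _ hℓ.ne_zero)).mp this
        exact h2 (Nat.dvd_gcd (hcancel _ hdm) (hcancel _ hdn))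
      obtain ⟨k, hk, hEq⟩ := (Nat.dvd_prime_pow hℓ).mp dvd1
      have hkeq : k = e - r := by
        by_contra hne
        have : k ≤ e - r - 1 := by omega
        exact ndvd (hEq ▸ pow_dvd_pow ℓ this)
      rw [hEq, hkeq, ← pow_add, Nat.sub_add_cancel hre.le]
    · subst hre
      rw [hm0, hn0] at hKeq
      simp [ZMod.val_zero] at hKeq
      rw [hKeq, addOrderOf_zero, one_mul]
  · intro hord
    rcases hr with ⟨h1, h2⟩ | ⟨hm0, hn0, hre⟩
    · have hre : r < e := rlt hℓ he m n h1 h2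
      have hK : addOrderOf K = ℓ ^ (e - r) := by
        have h : addOrderOf K * ℓ ^ r = ℓ ^ (e - r) * ℓ ^ r := by
          rw [hord, ← pow_add, Nat.sub_add_cancel hre.le]
        exact Nat.eq_of_mul_eq_mul_right (pow_pos hℓ.pos r) h
      have hmv : ℓ ^ r ∣ m.val := h1.trans (Nat.gcd_dvd_left _ _)
      have hnv : ℓ ^ r ∣ n.val := h1.trans (Nat.gcd_dvd_right _ _)
      have hcase : ¬ ℓ ^ (r + 1) ∣ m.val ∨ ¬ ℓ ^ (r + 1) ∣ n.val := by
        by_contra hc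
        push_neg at hc
        exact h2 (Nat.dvd_gcd hc.1 hc.2)
      rcases hcase with hm1 | hn1
      · exact build hℓ hre K m n hmv hm1 hnv hK
      · obtain ⟨P, Q, hPQ, hgen⟩ := build hℓ hre K n m hnv hn1 hmv hK
        exact ⟨Q, P, by rw [hPQ, add_comm], by rw [Set.pair_comm]; exact hgen⟩
    · subst hre
      have hK1 : addOrderOf K = 1 :=
        Nat.eq_of_mul_eq_mul_right (pow_pos hℓ.pos _) (by rw [hord, one_mul])
      have hK0 : K = 0 := AddMonoid.addOrderOf_eq_one_iff.mp hK1
      refine ⟨(1, 0), (0, 1), ?_, ?_⟩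
      · rw [hm0, hn0, hK0]
        simp [ZMod.val_zero]
      · exact gen_pair_left 1 0 1 (by ring)

private lemma transfer {G H : Type*} [AddCommGroup G] [AddCommGroup H] (φ : G ≃+ H) (K : G) (a b : ℕ)
    (h : ∃ P Q : G, K = a • P + b • Q ∧ AddSubgroup.closure ({P, Q} : Set G) = ⊤) :
    ∃ P Q : H, φ K = a • P + b • Q ∧ AddSubgroup.closure ({P, Q} : Set H) = ⊤ := by
  obtain ⟨P, Q, h1, h2⟩ := h
  refine ⟨φ P, φ Q, ?_, ?_⟩
  · rw [h1]; simp
  · have himg : ({φ P, φ Q} : Set H) = ⇑φ.toAddMonoidHom '' {P, Q} := by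
      simp [Set.image_pair]
    rw [himg, ← AddMonoidHom.map_closure, h2]
    exact AddSubgroup.map_top_of_surjective _ φ.surjective

theorem stmt_4 {G : Type*} [AddCommGroup G]
    (ℓ e : ℕ) (hℓ : ℓ.Prime) (he : 1 ≤ e)
    (hG : Nonempty (G ≃+ (ZMod (ℓ ^ e) × ZMod (ℓ ^ e))))
    (K : G) (m n : ZMod (ℓ ^ e))
    (r : ℕ)
    (hr : (ℓ ^ r ∣ Nat.gcd m.val n.val ∧ ¬ ℓ ^ (r + 1) ∣ Nat.gcd m.val n.val) ∨
          (m = 0 ∧ n = 0 ∧ r = e)) :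
    (∃ P Q : G, K = m.val • P + n.val • Q ∧
        AddSubgroup.closure ({P, Q} : Set G) = ⊤) ↔
      addOrderOf K * ℓ ^ r = ℓ ^ e := by
  obtain ⟨φ⟩ := hG
  have hord : addOrderOf K = addOrderOf (φ K) :=
    (addOrderOf_injective φ.toAddMonoidHom φ.injective K).symm
  rw [hord]
  constructor
  · intro h
    exact (main hℓ he (φ K) m n r hr).mp (transfer φ K _ _ h)
  · intro h
    obtain ⟨P, Q, h1, h2⟩ := (main hℓ he (φ K) m n r hr).mpr h
    have h3 := transfer φ.symm (φ K) m.val n.val ⟨P, Q, h1, h2⟩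
    rwa [φ.symm_apply_apply] at h3
end

section
/- Let G ≅ (ℤ/ℓ^eℤ)², ℓ prime. Given any K ∈ G and m, n ∈ ℤ/ℓ^eℤ such that ord(K)·ℓ^{v} = ℓ^e where v = min(v_ℓ(m), v_ℓ(n), e), the set of pairs (P,Q) with K = mP + nQ and ⟨P,Q⟩ = G has more than one element, provided ℓ^e > 2. -/
-- generation criterion: unit determinant
lemma det_gen {N : ℕ} [NeZero N] (X Q : ZMod N × ZMod N)
    (h : IsUnit (X.1 * Q.2 - X.2 * Q.1)) :
    AddSubgroup.closure ({X, Q} : Set (ZMod N × ZMod N)) = ⊤ := by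
  rw [AddSubgroup.eq_top_iff']
  intro z
  obtain ⟨u, hu⟩ := h
  have hι : ((u⁻¹ : (ZMod N)ˣ) : ZMod N) * (X.1 * Q.2 - X.2 * Q.1) = 1 := by
    rw [← hu, Units.inv_mul]
  set c : ZMod N := ((u⁻¹ : (ZMod N)ˣ) : ZMod N) * (Q.2 * z.1 - Q.1 * z.2) with hc
  set d : ZMod N := ((u⁻¹ : (ZMod N)ˣ) : ZMod N) * (X.1 * z.2 - X.2 * z.1) with hd
  have key : c.val • X + d.val • Q = z := by
    have h1 : (c.val : ZMod N) = c := by rw [ZMod.natCast_val, ZMod.cast_id]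
    have h2 : (d.val : ZMod N) = d := by rw [ZMod.natCast_val, ZMod.cast_id]
    have e1 : c.val • X = c • X := by rw [← Nat.cast_smul_eq_nsmul (ZMod N) c.val X, h1]
    have e2 : d.val • Q = d • Q := by rw [← Nat.cast_smul_eq_nsmul (ZMod N) d.val Q, h2]
    rw [e1, e2]
    ext
    · simp only [Prod.fst_add, Prod.smul_fst, smul_eq_mul, hc, hd]
      linear_combination z.1 * hι
    · simp only [Prod.snd_add, Prod.smul_snd, smul_eq_mul, hc, hd]
      linear_combination z.2 * hι
  rw [← key]
  have hXmem : X ∈ AddSubgroup.closure ({X, Q} : Set (ZMod N × ZMod N)) :=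
    AddSubgroup.subset_closure (Set.mem_insert _ _)
  have hQmem : Q ∈ AddSubgroup.closure ({X, Q} : Set (ZMod N × ZMod N)) :=
    AddSubgroup.subset_closure (Set.mem_insert_of_mem _ rfl)
  exact add_mem (nsmul_mem hXmem _) (nsmul_mem hQmem _)

-- construction lemma, case "μ is a unit": free variable Q
lemma buildQ {N : ℕ} [NeZero N] (m n : ZMod N) (k : ZMod N × ZMod N)
    (c μ ν : ZMod N) (X Q₁ Q₂ : ZMod N × ZMod N)
    (hm : m = c * μ) (hn : n = c * ν) (hk : k = c • X) (hμ : IsUnit μ)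
    (hQ : Q₁ ≠ Q₂)
    (hd1 : IsUnit (X.1 * Q₁.2 - X.2 * Q₁.1))
    (hd2 : IsUnit (X.1 * Q₂.2 - X.2 * Q₂.1)) :
    ({p : (ZMod N × ZMod N) × (ZMod N × ZMod N) |
      k = m • p.1 + n • p.2 ∧
      AddSubgroup.closure ({p.1, p.2} : Set (ZMod N × ZMod N)) = ⊤}).Nontrivial := by
  obtain ⟨w, hw⟩ := hμ
  have hinv : μ * ((w⁻¹ : (ZMod N)ˣ) : ZMod N) = 1 := by rw [← hw, Units.mul_inv]
  have key : ∀ Q : ZMod N × ZMod N, IsUnit (X.1 * Q.2 - X.2 * Q.1) →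
      (((w⁻¹ : (ZMod N)ˣ) : ZMod N) • (X - ν • Q), Q) ∈
      {p : (ZMod N × ZMod N) × (ZMod N × ZMod N) |
        k = m • p.1 + n • p.2 ∧
        AddSubgroup.closure ({p.1, p.2} : Set (ZMod N × ZMod N)) = ⊤} := by
    intro Q hd
    set ι : ZMod N := ((w⁻¹ : (ZMod N)ˣ) : ZMod N) with hι
    set P : ZMod N × ZMod N := ι • (X - ν • Q) with hP
    constructor
    · -- equation
      have h1 : μ • P = X - ν • Q := by
        rw [hP, smul_smul, hinv, one_smul]
      calc k = c • X := hk
        _ = c • (μ • P + ν • Q) := by rw [h1, sub_add_cancel]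
        _ = m • P + n • Q := by rw [smul_add, hm, hn, mul_smul, mul_smul]
    · -- generation
      apply det_gen
      have hdet : P.1 * Q.2 - P.2 * Q.1 = ι * (X.1 * Q.2 - X.2 * Q.1) := by
        rw [hP]
        simp only [Prod.smul_fst, Prod.smul_snd, Prod.fst_sub, Prod.snd_sub, smul_eq_mul]
        ring
      rw [hdet]
      exact (Units.isUnit w⁻¹).mul hd
  refine ⟨_, key Q₁ hd1, _, key Q₂ hd2, ?_⟩
  simp only [ne_eq, Prod.mk.injEq, not_and]
  intro _
  exact hQ

-- construction lemma, case "ν is a unit": free variable P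
lemma buildP {N : ℕ} [NeZero N] (m n : ZMod N) (k : ZMod N × ZMod N)
    (c μ ν : ZMod N) (X P₁ P₂ : ZMod N × ZMod N)
    (hm : m = c * μ) (hn : n = c * ν) (hk : k = c • X) (hν : IsUnit ν)
    (hP : P₁ ≠ P₂)
    (hd1 : IsUnit (P₁.1 * X.2 - P₁.2 * X.1))
    (hd2 : IsUnit (P₂.1 * X.2 - P₂.2 * X.1)) :
    ({p : (ZMod N × ZMod N) × (ZMod N × ZMod N) |
      k = m • p.1 + n • p.2 ∧
      AddSubgroup.closure ({p.1, p.2} : Set (ZMod N × ZMod N)) = ⊤}).Nontrivial := by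
  obtain ⟨w, hw⟩ := hν
  have hinv : ν * ((w⁻¹ : (ZMod N)ˣ) : ZMod N) = 1 := by rw [← hw, Units.mul_inv]
  have key : ∀ P : ZMod N × ZMod N, IsUnit (P.1 * X.2 - P.2 * X.1) →
      (P, ((w⁻¹ : (ZMod N)ˣ) : ZMod N) • (X - μ • P)) ∈
      {p : (ZMod N × ZMod N) × (ZMod N × ZMod N) |
        k = m • p.1 + n • p.2 ∧
        AddSubgroup.closure ({p.1, p.2} : Set (ZMod N × ZMod N)) = ⊤} := by
    intro P hd
    set ι : ZMod N := ((w⁻¹ : (ZMod N)ˣ) : ZMod N) with hι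
    set Q : ZMod N × ZMod N := ι • (X - μ • P) with hQ
    constructor
    · have h1 : ν • Q = X - μ • P := by
        rw [hQ, smul_smul, hinv, one_smul]
      calc k = c • X := hk
        _ = c • (μ • P + ν • Q) := by rw [h1, add_sub_cancel]
        _ = m • P + n • Q := by rw [smul_add, hm, hn, mul_smul, mul_smul]
    · apply det_gen
      have hdet : P.1 * Q.2 - P.2 * Q.1 = ι * (P.1 * X.2 - P.2 * X.1) := by
        rw [hQ]
        simp only [Prod.smul_fst, Prod.smul_snd, Prod.fst_sub, Prod.snd_sub, smul_eq_mul]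
        ring
      rw [hdet]
      exact (Units.isUnit w⁻¹).mul hd
  refine ⟨_, key P₁ hd1, _, key P₂ hd2, ?_⟩
  simp only [ne_eq, Prod.mk.injEq, not_and]
  intro h
  exact absurd h hP

-- from ℓ^(e-v) • x = 0 deduce ℓ^v ∣ x.val
lemma val_dvd_of_smul_zero {ℓ e v : ℕ} [NeZero (ℓ ^ e)] (hℓ1 : 1 < ℓ) (hve : v ≤ e)
    (x : ZMod (ℓ ^ e)) (h : ℓ ^ (e - v) • x = 0) : ℓ ^ v ∣ x.val := by
  have hcast : ((ℓ ^ (e - v) * x.val : ℕ) : ZMod (ℓ ^ e)) = 0 := by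
    rw [Nat.cast_mul, ZMod.natCast_val, ZMod.cast_id, ← nsmul_eq_mul, h]
  have hdvd := (ZMod.natCast_eq_zero_iff _ _).mp hcast
  have hsplit : ℓ ^ e = ℓ ^ (e - v) * ℓ ^ v := by
    rw [← pow_add]
    congr 1
    omega
  obtain ⟨t, ht⟩ := hdvd
  refine ⟨t, ?_⟩
  have hpos : 0 < ℓ ^ (e - v) := Nat.pow_pos (by omega)
  apply Nat.eq_of_mul_eq_mul_left hpos
  rw [ht, hsplit]
  ring

theorem stmt_14 {G : Type*} [AddCommGroup G]
    (ℓ e : ℕ) (hℓ : ℓ.Prime) (he : 1 ≤ e)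
    (hG : Nonempty (G ≃+ (ZMod (ℓ ^ e) × ZMod (ℓ ^ e))))
    (K : G) (m n : ZMod (ℓ ^ e))
    (v : ℕ)
    (hv : (ℓ ^ v ∣ Nat.gcd m.val n.val ∧ ¬ ℓ ^ (v + 1) ∣ Nat.gcd m.val n.val) ∨
          (m = 0 ∧ n = 0 ∧ v = e))
    (hsolv : addOrderOf K * ℓ ^ v = ℓ ^ e)
    (hbig : 2 < ℓ ^ e) :
    {p : G × G | K = m.val • p.1 + n.val • p.2 ∧
      AddSubgroup.closure ({p.1, p.2} : Set G) = ⊤}.Nontrivial := by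
  haveI : NeZero (ℓ ^ e) := ⟨by omega⟩
  obtain ⟨f⟩ := hG
  -- transfer to H := ZMod (ℓ ^ e) × ZMod (ℓ ^ e)
  suffices hH : ({p : (ZMod (ℓ ^ e) × ZMod (ℓ ^ e)) × (ZMod (ℓ ^ e) × ZMod (ℓ ^ e)) |
      f K = m • p.1 + n • p.2 ∧
      AddSubgroup.closure ({p.1, p.2} : Set (ZMod (ℓ ^ e) × ZMod (ℓ ^ e))) = ⊤}).Nontrivial by
    obtain ⟨p, ⟨hp1, hp2⟩, q, ⟨hq1, hq2⟩, hpq⟩ := hH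
    have back : ∀ r : (ZMod (ℓ ^ e) × ZMod (ℓ ^ e)) × (ZMod (ℓ ^ e) × ZMod (ℓ ^ e)),
        f K = m • r.1 + n • r.2 →
        AddSubgroup.closure ({r.1, r.2} : Set (ZMod (ℓ ^ e) × ZMod (ℓ ^ e))) = ⊤ →
        (f.symm r.1, f.symm r.2) ∈ {p : G × G | K = m.val • p.1 + n.val • p.2 ∧
          AddSubgroup.closure ({p.1, p.2} : Set G) = ⊤} := by
      intro r h1 h2
      constructor
      · have h3 : m • r.1 = m.val • r.1 := by
          rw [← Nat.cast_smul_eq_nsmul (ZMod (ℓ ^ e)) m.val r.1, ZMod.natCast_val, ZMod.cast_id]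
        have h4 : n • r.2 = n.val • r.2 := by
          rw [← Nat.cast_smul_eq_nsmul (ZMod (ℓ ^ e)) n.val r.2, ZMod.natCast_val, ZMod.cast_id]
        have h5 := congrArg f.symm h1
        rw [f.symm_apply_apply, h3, h4, map_add, map_nsmul, map_nsmul] at h5
        exact h5
      · have himg : ({f.symm r.1, f.symm r.2} : Set G) =
            f.symm '' ({r.1, r.2} : Set (ZMod (ℓ ^ e) × ZMod (ℓ ^ e))) := by
          rw [Set.image_pair]
        rw [himg, show ⇑f.symm = ⇑f.symm.toAddMonoidHom from rfl,
          ← AddMonoidHom.map_closure, h2]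
        exact AddSubgroup.map_top_of_surjective _ f.symm.surjective
    refine ⟨_, back p hp1 hp2, _, back q hq1 hq2, ?_⟩
    simp only [ne_eq, Prod.mk.injEq, not_and]
    intro h1 h2
    exact hpq (Prod.ext (f.symm.injective h1) (f.symm.injective h2))
  -- common facts about u := 1 + ℓ^(e-1)
  set u : ZMod (ℓ ^ e) := ((1 + ℓ ^ (e - 1) : ℕ) : ZMod (ℓ ^ e)) with hu_def
  have hldvd : ¬ ℓ ∣ 1 + ℓ ^ (e - 1) := by
    intro hdvd
    rcases Nat.lt_or_ge e 2 with h2 | h2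
    · have he1 : e = 1 := by omega
      subst he1
      simp only [Nat.sub_self, pow_zero] at hdvd
      have : ℓ ≤ 2 := Nat.le_of_dvd (by omega) hdvd
      have : 2 ≤ ℓ := hℓ.two_le
      have : ℓ = 2 := by omega
      simp [this] at hbig
    · have h3 : ℓ ∣ ℓ ^ (e - 1) := dvd_pow_self ℓ (by omega)
      have h4 : ℓ ∣ 1 := by
        have := Nat.dvd_sub hdvd h3
        simpa using this
      have := Nat.le_of_dvd (by omega) h4
      have := hℓ.two_le
      omega
  have hu : IsUnit u := by
    rw [hu_def, ZMod.isUnit_iff_coprime]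
    exact Nat.Coprime.pow_right e ((Nat.coprime_comm.mp ((hℓ.coprime_iff_not_dvd).mpr hldvd)))
  have hu1 : u ≠ 1 := by
    rw [hu_def]
    intro h
    have h' : ((ℓ ^ (e - 1) : ℕ) : ZMod (ℓ ^ e)) = 0 := by
      push_cast at h ⊢
      linear_combination h
    rw [ZMod.natCast_eq_zero_iff] at h'
    have h1 : ℓ ^ e ≤ ℓ ^ (e - 1) := Nat.le_of_dvd (Nat.pow_pos hℓ.pos) h'
    have h2 : ℓ ^ (e - 1) < ℓ ^ e := Nat.pow_lt_pow_right hℓ.one_lt (by omega)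
    omega
  rcases hv with ⟨hgcd, hgcd'⟩ | ⟨hm0, hn0, hve⟩
  · -- main case
    have hd0 : Nat.gcd m.val n.val ≠ 0 := by
      intro h
      rw [h] at hgcd'
      exact hgcd' (dvd_zero _)
    have hvlt : v < e := by
      have h1 : ℓ ^ v ≤ Nat.gcd m.val n.val := Nat.le_of_dvd (Nat.pos_of_ne_zero hd0) hgcd
      have h2 : Nat.gcd m.val n.val < ℓ ^ e := by
        rcases Nat.gcd_eq_zero_iff.not.mp hd0 |> not_and_or.mp with hm' | hn'
        · exact lt_of_le_of_lt (Nat.le_of_dvd (Nat.pos_of_ne_zero hm') (Nat.gcd_dvd_left _ _))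
            (ZMod.val_lt m)
        · exact lt_of_le_of_lt (Nat.le_of_dvd (Nat.pos_of_ne_zero hn') (Nat.gcd_dvd_right _ _))
            (ZMod.val_lt n)
      have : ℓ ^ v < ℓ ^ e := lt_of_le_of_lt h1 h2
      exact (Nat.pow_lt_pow_iff_right hℓ.one_lt).mp this
    have hmdvd : ℓ ^ v ∣ m.val := dvd_trans hgcd (Nat.gcd_dvd_left _ _)
    have hndvd : ℓ ^ v ∣ n.val := dvd_trans hgcd (Nat.gcd_dvd_right _ _)
    have hunit : ¬ ℓ ∣ m.val / ℓ ^ v ∨ ¬ ℓ ∣ n.val / ℓ ^ v := by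
      by_contra h
      push_neg at h
      obtain ⟨h1, h2⟩ := h
      apply hgcd'
      apply Nat.dvd_gcd
      · rw [← Nat.mul_div_cancel' hmdvd]
        rw [pow_succ]
        exact mul_dvd_mul_left _ h1
      · rw [← Nat.mul_div_cancel' hndvd]
        rw [pow_succ]
        exact mul_dvd_mul_left _ h2
    -- order of f K
    have hordK : addOrderOf K = ℓ ^ (e - v) := by
      have hsplit : ℓ ^ (e - v) * ℓ ^ v = ℓ ^ e := by
        rw [← pow_add]
        congr 1
        omega
      exact Nat.eq_of_mul_eq_mul_right (Nat.pow_pos hℓ.pos)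
        (hsolv.trans hsplit.symm)
    have hordfK : addOrderOf (f K) = ℓ ^ (e - v) := by
      rw [AddEquiv.addOrderOf_eq, hordK]
    have hsmulK : ℓ ^ (e - v) • f K = 0 := by
      rw [← hordfK]
      exact addOrderOf_nsmul_eq_zero (f K)
    have hk1dvd : ℓ ^ v ∣ (f K).1.val :=
      val_dvd_of_smul_zero hℓ.one_lt (le_of_lt hvlt) _ (congrArg Prod.fst hsmulK)
    have hk2dvd : ℓ ^ v ∣ (f K).2.val :=
      val_dvd_of_smul_zero hℓ.one_lt (le_of_lt hvlt) _ (congrArg Prod.snd hsmulK)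
    set A : ℕ := (f K).1.val / ℓ ^ v with hA
    set B : ℕ := (f K).2.val / ℓ ^ v with hB
    set α : ZMod (ℓ ^ e) := (A : ZMod (ℓ ^ e)) with hαdef
    set β : ZMod (ℓ ^ e) := (B : ZMod (ℓ ^ e)) with hβdef
    set c : ZMod (ℓ ^ e) := ((ℓ ^ v : ℕ) : ZMod (ℓ ^ e)) with hcdef
    set μ : ZMod (ℓ ^ e) := ((m.val / ℓ ^ v : ℕ) : ZMod (ℓ ^ e)) with hμdef
    set ν : ZMod (ℓ ^ e) := ((n.val / ℓ ^ v : ℕ) : ZMod (ℓ ^ e)) with hνdef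
    have hm' : m = c * μ := by
      rw [hcdef, hμdef, ← Nat.cast_mul, Nat.mul_div_cancel' hmdvd, ZMod.natCast_val, ZMod.cast_id]
    have hn' : n = c * ν := by
      rw [hcdef, hνdef, ← Nat.cast_mul, Nat.mul_div_cancel' hndvd, ZMod.natCast_val, ZMod.cast_id]
    have hk' : f K = c • (α, β) := by
      have h1 : c * α = (f K).1 := by
        rw [hcdef, hαdef, ← Nat.cast_mul, hA, Nat.mul_div_cancel' hk1dvd,
          ZMod.natCast_val, ZMod.cast_id]
      have h2 : c * β = (f K).2 := by
        rw [hcdef, hβdef, ← Nat.cast_mul, hB, Nat.mul_div_cancel' hk2dvd,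
          ZMod.natCast_val, ZMod.cast_id]
      ext
      · rw [Prod.smul_fst]
        exact (h1.symm : _)
      · rw [Prod.smul_snd]
        exact (h2.symm : _)
    -- primitivity of (α, β)
    have hprim : ¬ ℓ ∣ A ∨ ¬ ℓ ∣ B := by
      by_contra h
      push_neg at h
      obtain ⟨h1, h2⟩ := h
      have hk1 : ℓ ^ (v + 1) ∣ (f K).1.val := by
        rw [← Nat.mul_div_cancel' hk1dvd, pow_succ]
        exact mul_dvd_mul_left _ h1
      have hk2 : ℓ ^ (v + 1) ∣ (f K).2.val := by
        rw [← Nat.mul_div_cancel' hk2dvd, pow_succ]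
        exact mul_dvd_mul_left _ h2
      have hsm : ℓ ^ (e - v - 1) • f K = 0 := by
        have comp : ∀ x : ZMod (ℓ ^ e), ℓ ^ (v + 1) ∣ x.val → ℓ ^ (e - v - 1) • x = 0 := by
          intro x hx
          obtain ⟨t, ht⟩ := hx
          have : ℓ ^ (e - v - 1) • x = ((ℓ ^ (e - v - 1) * x.val : ℕ) : ZMod (ℓ ^ e)) := by
            rw [Nat.cast_mul, ZMod.natCast_val, ZMod.cast_id, ← nsmul_eq_mul]
          rw [this, ZMod.natCast_eq_zero_iff, ht, ← mul_assoc, ← pow_add]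
          have : e - v - 1 + (v + 1) = e := by omega
          rw [this]
          exact Dvd.intro t rfl
        ext
        · simpa using comp (f K).1 hk1
        · simpa using comp (f K).2 hk2
      have hdvd := addOrderOf_dvd_of_nsmul_eq_zero hsm
      rw [hordfK] at hdvd
      have := (Nat.pow_dvd_pow_iff_le_right hℓ.one_lt).mp hdvd
      omega
    -- units from non-divisibility
    have mkUnit : ∀ x : ℕ, ¬ ℓ ∣ x → IsUnit ((x : ℕ) : ZMod (ℓ ^ e)) := by
      intro x hx
      rw [ZMod.isUnit_iff_coprime]
      exact Nat.Coprime.pow_right e (Nat.coprime_comm.mp ((hℓ.coprime_iff_not_dvd).mpr hx))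
    rcases hunit with hμu | hνu
    · have hμ : IsUnit μ := mkUnit _ hμu
      rcases hprim with hαp | hβp
      · have hα : IsUnit α := mkUnit _ hαp
        apply buildQ m n (f K) c μ ν (α, β) (0, 1) (0, u) hm' hn' hk' hμ
        · intro h
          exact hu1 ((congrArg Prod.snd h).symm)
        · simpa using hα
        · simpa using hα.mul hu
      · have hβ : IsUnit β := mkUnit _ hβp
        apply buildQ m n (f K) c μ ν (α, β) (1, 0) (u, 0) hm' hn' hk' hμ
        · intro h
          exact hu1 ((congrArg Prod.fst h).symm)
        · simpa using hβ.neg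
        · simpa using (hβ.mul hu).neg
    · have hν : IsUnit ν := mkUnit _ hνu
      rcases hprim with hαp | hβp
      · have hα : IsUnit α := mkUnit _ hαp
        apply buildP m n (f K) c μ ν (α, β) (0, 1) (0, u) hm' hn' hk' hν
        · intro h
          exact hu1 ((congrArg Prod.snd h).symm)
        · simpa using hα.neg
        · simpa using (hu.mul hα).neg
      · have hβ : IsUnit β := mkUnit _ hβp
        apply buildP m n (f K) c μ ν (α, β) (1, 0) (u, 0) hm' hn' hk' hν
        · intro h
          exact hu1 ((congrArg Prod.fst h).symm)
        · simpa using hβ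
        · simpa using hu.mul hβ
  · -- trivial case m = n = 0
    subst hm0
    subst hn0
    have hK1 : addOrderOf K = 1 := by
      have h0 : 0 < ℓ ^ e := by omega
      have h1 : addOrderOf K * ℓ ^ e = 1 * ℓ ^ e := by
        rw [one_mul]
        exact hve ▸ hsolv
      exact Nat.eq_of_mul_eq_mul_right h0 h1
    have hK0 : K = 0 := AddMonoid.addOrderOf_eq_one_iff.mp hK1
    apply buildQ 0 0 (f K) 0 1 0 ((1 : ZMod (ℓ ^ e)), (0 : ZMod (ℓ ^ e))) (0, 1) (0, u)
      (by ring) (by ring) (by rw [hK0, map_zero, zero_smul]) isUnit_one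
    · intro h
      exact hu1 ((congrArg Prod.snd h).symm)
    · simp
    · simpa using hu
end
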